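/- Let a, b, c be nonnegative integers with c ≥ 1. Consider the c×c integer matrices M and M' with rows and columns indexed by 1 ≤ i, j ≤ c, whose (i,j) entries are C(a+b+i−1, a+i−j) and C(a+b, a+i−j) respectively. Then det(M) = det(M'), and det(M') · H(b+c) · H(c+a) · H(a+b) = H(a) · H(b) · H(c) · H(a+b+c), where H(n) = Π_{i=0}^{n−1} i!. In particular det(M) = det(M') = H(a)H(b)H(c)H(a+b+c) / ( H(b+c)H(c+a)H(a+b) ). -/

import Mathlib

/-- Binomial coefficient of integers with the convention `iC n k = 0` when `k < 0` or `k > n`. -/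
def iC (n k : ℤ) : ℤ := if 0 ≤ k ∧ k ≤ n then (n.toNat.choose k.toNat : ℤ) else 0

/-- `H n = Π_{i=0}^{n−1} i!` (so `H 0 = 1`). -/
def Hfac (n : ℕ) : ℕ := ∏ i ∈ Finset.range n, i.factorial

/-!
Indexing from `0`, the matrix `(C(a+b+i, a+i-j))` is the Pascal matrix `(C(i, k))` times
`M' = (C(a+b, a+i-j))`, by Vandermonde's convolution, and the Pascal matrix is unitriangular.

For `M'`, multiplying row `i` by `(a+i)! (b+c-1-i)! / (a+b)!` turns the entry `(i, j)` into
`Q_j(i)`, where `Q_j(x) = (x+a)(x+a-1)⋯(x+a-j+1) · (b+j+1-x)(b+j+2-x)⋯(b+c-1-x)`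
(`macmahonPoly a b c j`) has degree less than `c`. A matrix `(Q_j(v_i))` with all `deg Q_j < c`
factors as a Vandermonde matrix times the coefficient matrix, so its determinant is unchanged by
translating all `v_i`. Evaluated at `b, b+1, …, b+c-1` instead of `0, 1, …, c-1` the matrix is
upper triangular, with diagonal entries `(a+b+j)! (c-1-j)! / (a+b)!`.
-/

open Finset Matrix Polynomial Nat

lemma iC_of_neg {n k : ℤ} (hk : k < 0) : iC n k = 0 := by
  simp [iC, not_le.mpr hk]

lemma iC_of_lt {n k : ℤ} (h : n < k) : iC n k = 0 := by
  rw [iC, if_neg (by omega)]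

@[simp]
lemma iC_natCast (n k : ℕ) : iC n k = n.choose k := by
  unfold iC
  split_ifs with h
  · simp
  · rw [choose_eq_zero_of_lt (by omega), Nat.cast_zero]

lemma sum_choose_mul_iC (n m : ℕ) (k : ℤ) :
    ∑ t ∈ range (n + 1), (n.choose t : ℤ) * iC m (k - t) = iC (n + m) k := by
  rcases lt_or_ge k 0 with hk | hk
  · rw [iC_of_neg hk]
    exact sum_eq_zero fun t _ => by rw [iC_of_neg (by omega), mul_zero]
  lift k to ℕ using hk
  have hn : ∑ t ∈ range (n + 1), (n.choose t : ℤ) * iC m (k - t) =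
      ∑ t ∈ range (n + k + 1), (n.choose t : ℤ) * iC m (k - t) :=
    sum_subset (range_subset_range.2 (by omega)) fun t _ ht => by
      rw [choose_eq_zero_of_lt (by simpa using ht), Nat.cast_zero, zero_mul]
  have hk : ∑ t ∈ range (k + 1), (n.choose t : ℤ) * iC m (k - t) =
      ∑ t ∈ range (n + k + 1), (n.choose t : ℤ) * iC m (k - t) :=
    sum_subset (range_subset_range.2 (by omega)) fun t _ ht => by
      rw [iC_of_neg (by simp at ht; omega), mul_zero]
  rw [hn, ← hk, ← Nat.cast_add, iC_natCast, add_choose_eq,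
    Nat.sum_antidiagonal_eq_sum_range_succ_mk, Nat.cast_sum]
  refine sum_congr rfl fun t ht => ?_
  rw [← Nat.cast_sub (by simp at ht; omega), iC_natCast, Nat.cast_mul]

lemma det_of_choose (R : Type*) [CommRing R] (c : ℕ) :
    det (of fun i k : Fin c => (i.val.choose k.val : R)) = 1 := by
  rw [det_of_isLowerTriangular _ fun i k (h : i < k) => by simp [choose_eq_zero_of_lt h]]
  simp

lemma of_iC_shift_eq_choose_mul (a b c : ℕ) :
    (of fun i j : Fin c =>
        iC ((a : ℤ) + b + (i.val : ℤ)) ((a : ℤ) + (i.val : ℤ) - (j.val : ℤ))) =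
      (of fun i k : Fin c => (i.val.choose k.val : ℤ)) *
        of fun k j : Fin c => iC ((a : ℤ) + b) ((a : ℤ) + (k.val : ℤ) - (j.val : ℤ)) := by
  ext i j
  set f : ℕ → ℤ := fun k => (i.val.choose k : ℤ) * iC ((a : ℤ) + b) (a + k - j)
  have htrunc : ∑ k ∈ range c, f k = ∑ k ∈ range (i.val + 1), f k :=
    (sum_subset (range_subset_range.2 i.isLt) fun k _ hk => by
      simp [f, choose_eq_zero_of_lt (show i.val < k by simpa using hk)]).symm
  change _ = ∑ k : Fin c, f k
  rw [of_apply, Fin.sum_univ_eq_sum_range f, htrunc, ← sum_range_reflect,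
    show (a : ℤ) + b + i = (i.val : ℤ) + ((a + b : ℕ) : ℤ) by push_cast; ring,
    ← sum_choose_mul_iC]
  refine sum_congr rfl fun t ht => ?_
  have ht : t ≤ i.val := by simpa [Nat.lt_succ_iff] using ht
  simp only [f, add_tsub_cancel_right, choose_symm_of_eq_add (Nat.sub_add_cancel ht).symm]
  push_cast [Nat.sub_sub_self ht, ht]
  ring_nf

theorem det_iC_shift (a b c : ℕ) :
    det (of fun i j : Fin c =>
        iC ((a : ℤ) + b + (i.val : ℤ)) ((a : ℤ) + (i.val : ℤ) - (j.val : ℤ))) =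
      det (of fun i j : Fin c =>
        iC ((a : ℤ) + b) ((a : ℤ) + (i.val : ℤ) - (j.val : ℤ))) := by
  rw [of_iC_shift_eq_choose_mul, det_mul, det_of_choose, one_mul]

section Translation

variable {R : Type*} [CommRing R] {n : ℕ}

lemma of_eval_eq_vandermonde_mul (Q : Fin n → R[X]) (hQ : ∀ j, (Q j).natDegree < n)
    (v : Fin n → R) :
    of (fun i j => (Q j).eval (v i)) = vandermonde v * of fun k j : Fin n => (Q j).coeff k := by
  ext i j
  rw [of_apply, mul_apply, eval_eq_sum_range' (hQ j),
    ← Fin.sum_univ_eq_sum_range (fun k => (Q j).coeff k * v i ^ k)]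
  simp [vandermonde_apply, mul_comm]

lemma det_of_eval_add (Q : Fin n → R[X]) (hQ : ∀ j, (Q j).natDegree < n) (v : Fin n → R)
    (t : R) :
    det (of fun i j => (Q j).eval (v i + t)) = det (of fun i j => (Q j).eval (v i)) := by
  rw [of_eval_eq_vandermonde_mul Q hQ (fun i => v i + t), of_eval_eq_vandermonde_mul Q hQ v,
    det_mul, det_mul, det_vandermonde_add]

end Translation

noncomputable def macmahonPoly (a b c j : ℕ) : ℤ[X] :=
  (descPochhammer ℤ j).comp (X + C (a : ℤ)) *
    (ascPochhammer ℤ (c - 1 - j)).comp (C ((b + j + 1 : ℕ) : ℤ) - X)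

lemma macmahonPoly_eval (a b c j : ℕ) (x : ℤ) :
    (macmahonPoly a b c j).eval x =
      (descPochhammer ℤ j).eval (x + a) *
        (ascPochhammer ℤ (c - 1 - j)).eval (b + j + 1 - x) := by
  simp [macmahonPoly, eval_comp]

lemma natDegree_macmahonPoly_lt (a b c : ℕ) {j : ℕ} (hj : j < c) :
    (macmahonPoly a b c j).natDegree < c := by
  have hdesc : ((descPochhammer ℤ j).comp (X + C (a : ℤ))).natDegree = j := by
    rw [natDegree_comp, descPochhammer_natDegree, natDegree_X_add_C, mul_one]
  have hasc : ((ascPochhammer ℤ (c - 1 - j)).comp (C ((b + j + 1 : ℕ) : ℤ) - X)).natDegree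
      = c - 1 - j := by
    rw [natDegree_comp, ascPochhammer_natDegree, ← neg_sub, natDegree_neg, natDegree_X_sub_C,
      mul_one]
  have := natDegree_mul_le (p := (descPochhammer ℤ j).comp (X + C (a : ℤ)))
    (q := (ascPochhammer ℤ (c - 1 - j)).comp (C ((b + j + 1 : ℕ) : ℤ) - X))
  rw [macmahonPoly]
  omega

lemma factorial_mul_descFactorial_mul_ascFactorial (p q j m : ℕ) :
    (p + q)! * (p + j).descFactorial j * (q + 1).ascFactorial m =
      (p + j)! * (q + m)! * (p + q).choose p := by
  rw [← factorial_mul_descFactorial (Nat.le_add_left j p), ← factorial_mul_ascFactorial q m,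
    ← choose_mul_factorial_mul_factorial (Nat.le_add_right p q), add_tsub_cancel_right,
    add_tsub_cancel_left]
  ring

lemma factorial_mul_macmahonPoly_eval {a b c i j : ℕ} (hi : i < c) (hj : j < c) :
    ((a + b)! : ℤ) * (macmahonPoly a b c j).eval (i : ℤ) =
      (a + i)! * (b + (c - 1 - i))! * iC ((a : ℤ) + b) ((a : ℤ) + i - j) := by
  rw [macmahonPoly_eval]
  by_cases hlo : a + i < j
  · rw [iC_of_neg (by omega), show (i : ℤ) + a = ((a + i : ℕ) : ℤ) by push_cast; ring,
      descPochhammer_eval_coe_nat_of_lt hlo]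
    simp
  by_cases hhi : b + j < i
  · rw [iC_of_lt (by omega), show (b : ℤ) + j + 1 - i = -((i - b - j - 1 : ℕ) : ℤ) by omega,
      ascPochhammer_eval_neg_coe_nat_of_lt (by omega)]
    simp
  obtain ⟨p, hp⟩ : ∃ p, a + i = p + j := ⟨a + i - j, by omega⟩
  obtain ⟨q, hq⟩ : ∃ q, b + j = q + i := ⟨b + j - i, by omega⟩
  rw [show (i : ℤ) + a = ((p + j : ℕ) : ℤ) by push_cast; omega,
    show (b : ℤ) + j + 1 - i = ((q + 1 : ℕ) : ℤ) by push_cast; omega,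
    show (a : ℤ) + b = ((p + q : ℕ) : ℤ) by push_cast; omega,
    show (a : ℤ) + i - j = (p : ℤ) by omega, iC_natCast, descPochhammer_eval_eq_descFactorial,
    ascPochhammer_nat_eq_natCast_ascFactorial, show a + b = p + q by omega, hp,
    show b + (c - 1 - i) = q + (c - 1 - j) by omega, ← mul_assoc]
  exact_mod_cast factorial_mul_descFactorial_mul_ascFactorial p q j (c - 1 - j)

lemma macmahonPoly_eval_add_eq_zero {a b c i j : ℕ} (hi : i < c) (hji : j < i) :
    (macmahonPoly a b c j).eval ((i : ℤ) + b) = 0 := by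
  rw [macmahonPoly_eval, show (b : ℤ) + j + 1 - (i + b) = -((i - j - 1 : ℕ) : ℤ) by omega,
    ascPochhammer_eval_neg_coe_nat_of_lt (by omega), mul_zero]

lemma factorial_mul_macmahonPoly_eval_add_self (a b c j : ℕ) :
    ((a + b)! : ℤ) * (macmahonPoly a b c j).eval ((j : ℤ) + b) =
      (a + b + j)! * (c - 1 - j)! := by
  rw [macmahonPoly_eval, show (b : ℤ) + j + 1 - (j + b) = 1 by ring, ascPochhammer_eval_one,
    show (j : ℤ) + b + a = ((a + b + j : ℕ) : ℤ) by push_cast; ring,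
    descPochhammer_eval_eq_descFactorial, ← mul_assoc]
  norm_cast
  rw [← factorial_mul_descFactorial (Nat.le_add_left j (a + b)), add_tsub_cancel_right]

theorem det_iC_mul_prod_factorial (a b c : ℕ) :
    det (of fun i j : Fin c => iC ((a : ℤ) + b) ((a : ℤ) + (i.val : ℤ) - (j.val : ℤ))) *
        ((∏ i ∈ range c, ((a + i)! : ℤ)) * ∏ i ∈ range c, ((b + i)! : ℤ)) =
      (∏ i ∈ range c, (i ! : ℤ)) * ∏ i ∈ range c, ((a + b + i)! : ℤ) := by
  set M := of fun i j : Fin c => iC ((a : ℤ) + b) ((a : ℤ) + (i.val : ℤ) - (j.val : ℤ))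
  set E : (Fin c → ℤ) → Matrix (Fin c) (Fin c) ℤ :=
    fun v => of fun i j => (macmahonPoly a b c j).eval (v i)
  have hpow : ((a + b)! : ℤ) ^ c = ∏ _i : Fin c, ((a + b)! : ℤ) := by simp
  have hrows : ((a + b)! : ℤ) ^ c * det (E fun i => (i.val : ℤ)) =
      (∏ i : Fin c, ((a + i)! * (b + (c - 1 - i))! : ℤ)) * det M := by
    rw [hpow, ← det_mul_column, ← det_mul_column]
    congr 1
    ext i j
    exact factorial_mul_macmahonPoly_eval i.isLt j.isLt
  have hshift : det (E fun i => (i.val : ℤ)) = det (E fun i => (i.val : ℤ) + b) :=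
    (det_of_eval_add _ (fun j => natDegree_macmahonPoly_lt a b c j.isLt) _ _).symm
  have htri : det (E fun i => (i.val : ℤ) + b) =
      ∏ j : Fin c, (macmahonPoly a b c j).eval ((j.val : ℤ) + b) :=
    det_of_isUpperTriangular fun i j (h : j < i) => macmahonPoly_eval_add_eq_zero i.isLt h
  have hdiag :
      ((a + b)! : ℤ) ^ c * ∏ j : Fin c, (macmahonPoly a b c j).eval ((j.val : ℤ) + b) =
      ∏ j : Fin c, ((a + b + j)! * (c - 1 - j)! : ℤ) := by
    rw [hpow, ← prod_mul_distrib]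
    exact prod_congr rfl fun j _ => factorial_mul_macmahonPoly_eval_add_self a b c j
  have key : (∏ i : Fin c, ((a + i)! * (b + (c - 1 - i))! : ℤ)) * det M =
      ∏ j : Fin c, ((a + b + j)! * (c - 1 - j)! : ℤ) := by
    rw [← hrows, hshift, htri, hdiag]
  rw [Fin.prod_univ_eq_prod_range (fun i => ((a + i)! * (b + (c - 1 - i))! : ℤ)),
    Fin.prod_univ_eq_prod_range (fun j => ((a + b + j)! * (c - 1 - j)! : ℤ)),
    prod_mul_distrib, prod_mul_distrib,
    prod_range_reflect (fun i => ((b + i)! : ℤ)),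
    prod_range_reflect (fun i => (i ! : ℤ))] at key
  linear_combination key

lemma Hfac_add (m n : ℕ) : Hfac (m + n) = Hfac m * ∏ i ∈ range n, (m + i)! :=
  prod_range_add _ m n

lemma Hfac_ne_zero (n : ℕ) : Hfac n ≠ 0 :=
  prod_ne_zero_iff.2 fun i _ => factorial_ne_zero i

theorem det_iC_mul_Hfac (a b c : ℕ) :
    det (of fun i j : Fin c => iC ((a : ℤ) + b) ((a : ℤ) + (i.val : ℤ) - (j.val : ℤ))) *
        (Hfac (b + c) : ℤ) * (Hfac (c + a) : ℤ) * (Hfac (a + b) : ℤ) =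
      (Hfac a : ℤ) * (Hfac b : ℤ) * (Hfac c : ℤ) * (Hfac (a + b + c) : ℤ) := by
  rw [add_comm c a, Hfac_add b, Hfac_add a, Hfac_add (a + b),
    show Hfac c = ∏ i ∈ range c, i ! from rfl]
  push_cast
  linear_combination (Hfac a * Hfac b * Hfac (a + b) : ℤ) * det_iC_mul_prod_factorial a b c

theorem stmt_17_general (a b c : ℕ) :
    Matrix.det (Matrix.of fun i j : Fin c =>
        iC ((a : ℤ) + b + ((i.val : ℤ) + 1) - 1) ((a : ℤ) + ((i.val : ℤ) + 1) - ((j.val : ℤ) + 1)))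
      = Matrix.det (Matrix.of fun i j : Fin c =>
        iC ((a : ℤ) + b) ((a : ℤ) + ((i.val : ℤ) + 1) - ((j.val : ℤ) + 1))) ∧
    Matrix.det (Matrix.of fun i j : Fin c =>
        iC ((a : ℤ) + b) ((a : ℤ) + ((i.val : ℤ) + 1) - ((j.val : ℤ) + 1)))
      * (Hfac (b + c) : ℤ) * (Hfac (c + a) : ℤ) * (Hfac (a + b) : ℤ)
      = (Hfac a : ℤ) * (Hfac b : ℤ) * (Hfac c : ℤ) * (Hfac (a + b + c) : ℤ) ∧
    ((Matrix.det (Matrix.of fun i j : Fin c =>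
        iC ((a : ℤ) + b) ((a : ℤ) + ((i.val : ℤ) + 1) - ((j.val : ℤ) + 1))) : ℚ)
      = (Hfac a : ℚ) * (Hfac b : ℚ) * (Hfac c : ℚ) * (Hfac (a + b + c) : ℚ)
        / ((Hfac (b + c) : ℚ) * (Hfac (c + a) : ℚ) * (Hfac (a + b) : ℚ))) := by
  have hshift₁ (x y : ℤ) : x + (y + 1) - 1 = x + y := by ring
  have hshift₂ (x y z : ℤ) : x + (y + 1) - (z + 1) = x + y - z := by ring
  simp only [hshift₁, hshift₂]
  have hH := det_iC_mul_Hfac a b c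
  refine ⟨det_iC_shift a b c, hH, ?_⟩
  rw [eq_div_iff (by simp [Hfac_ne_zero]), ← mul_assoc, ← mul_assoc]
  have hHℚ := congrArg (Int.cast : ℤ → ℚ) hH
  push_cast [Int.cast_det] at hHℚ
  exact hHℚ

/-- **Lemma 3.9 (Grinberg, MacMahon).** For nonnegative integers `a, b, c` with `c ≥ 1`,
the `c×c` matrices `M = (C(a+b+i−1, a+i−j))_{1≤i,j≤c}` and `M' = (C(a+b, a+i−j))_{1≤i,j≤c}`
have equal determinants, equal to `H(a)H(b)H(c)H(a+b+c) / (H(b+c)H(c+a)H(a+b))`. -/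
theorem stmt_17 (a b c : ℕ) (hc : 1 ≤ c) :
    Matrix.det (Matrix.of fun i j : Fin c =>
        iC ((a : ℤ) + b + ((i.val : ℤ) + 1) - 1) ((a : ℤ) + ((i.val : ℤ) + 1) - ((j.val : ℤ) + 1)))
      = Matrix.det (Matrix.of fun i j : Fin c =>
        iC ((a : ℤ) + b) ((a : ℤ) + ((i.val : ℤ) + 1) - ((j.val : ℤ) + 1))) ∧
    Matrix.det (Matrix.of fun i j : Fin c =>
        iC ((a : ℤ) + b) ((a : ℤ) + ((i.val : ℤ) + 1) - ((j.val : ℤ) + 1)))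
      * (Hfac (b + c) : ℤ) * (Hfac (c + a) : ℤ) * (Hfac (a + b) : ℤ)
      = (Hfac a : ℤ) * (Hfac b : ℤ) * (Hfac c : ℤ) * (Hfac (a + b + c) : ℤ) ∧
    ((Matrix.det (Matrix.of fun i j : Fin c =>
        iC ((a : ℤ) + b) ((a : ℤ) + ((i.val : ℤ) + 1) - ((j.val : ℤ) + 1))) : ℚ)
      = (Hfac a : ℚ) * (Hfac b : ℚ) * (Hfac c : ℚ) * (Hfac (a + b + c) : ℚ)
        / ((Hfac (b + c) : ℚ) * (Hfac (c + a) : ℚ) * (Hfac (a + b) : ℚ))) :=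
  stmt_17_general a b c
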